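/- arXiv:1009.0530 — 4 statements merged into one kernel-verified Lean document; each statement's English description precedes it below -/
import Mathlib

section
/- Suppose the restricted eigenvalue condition RE(s₀, k₀, Σ₀) holds with constant K(s₀,k₀,Σ₀), i.e., for every subset J of {1,…,p} with |J| ≤ s₀ and every υ ≠ 0 with ‖υ_{J^c}‖₁ ≤ k₀‖υ_J‖₁ we have ‖Σ₀^{1/2}υ‖₂ ≥ ‖υ_J‖₂ / K(s₀,k₀,Σ₀). Then for m = (k₀+1)s₀, the smallest m-sparse eigenvalue satisfies sqrt(ρ_min(m)) ≥ 1/(sqrt(2+k₀²)·K(s₀,k₀,Σ₀)). -/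
/-!
Let `T` be the support of `t` and `J` the set of the `min(s₀, |T|)` largest coordinates of `t`
in absolute value. Every coordinate outside `J` is at most `m := min_{i ∈ J} |tᵢ|` in absolute
value, and there are at most `k₀ s₀` of them, so `t` lies in the cone of the restricted eigenvalue
condition for `J`. The same threshold gives `‖t_{Jᶜ}‖₂² ≤ m ‖t_{Jᶜ}‖₁ ≤ k₀ m ‖t_J‖₁ ≤ k₀ ‖t_J‖₂²`,
hence `‖t‖₂² ≤ (1 + k₀) ‖t_J‖₂² ≤ (2 + k₀²) K² tᵀΣ₀t`.
-/

open Matrix Finset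

namespace Finset

variable {α : Type*}

theorem exists_subset_card_eq_forall_mem_sdiff_le [DecidableEq α] {β : Type*} [LinearOrder β]
    (f : α → β) {T : Finset α} {n : ℕ} (hn : n ≤ #T) :
    ∃ J ⊆ T, #J = n ∧ ∀ i ∈ J, ∀ j ∈ T \ J, f j ≤ f i := by
  induction n with
  | zero => exact ⟨∅, empty_subset _, card_empty, by simp⟩
  | succ n ih =>
    obtain ⟨J, hJT, hJcard, hJtop⟩ := ih (by omega)
    have hne : (T \ J).Nonempty := by
      rw [← card_pos, card_sdiff_of_subset hJT]; omega
    obtain ⟨a, ha, hamax⟩ := exists_max_image (T \ J) f hne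
    have haJ : a ∉ J := (mem_sdiff.1 ha).2
    refine ⟨insert a J, insert_subset (mem_sdiff.1 ha).1 hJT,
      by rw [card_insert_of_notMem haJ, hJcard], fun i hi j hj => ?_⟩
    have hjJ : j ∈ T \ J :=
      mem_sdiff.2 ⟨(mem_sdiff.1 hj).1, fun h => (mem_sdiff.1 hj).2 (mem_insert_of_mem h)⟩
    rcases mem_insert.1 hi with rfl | hi
    · exact hamax j hjJ
    · exact hJtop i hi j hjJ

variable {x : α → ℝ} {A B : Finset α} {m k : ℝ}

theorem sum_abs_le_mul_sum_abs_of_card_le (hm : 0 ≤ m) (hk : 0 ≤ k)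
    (hA : ∀ j ∈ A, |x j| ≤ m) (hB : ∀ i ∈ B, m ≤ |x i|) (hcard : (#A : ℝ) ≤ k * #B) :
    ∑ j ∈ A, |x j| ≤ k * ∑ i ∈ B, |x i| :=
  calc ∑ j ∈ A, |x j| ≤ #A * m := by simpa using sum_le_sum hA
    _ ≤ k * (#B * m) := by rw [← mul_assoc]; exact mul_le_mul_of_nonneg_right hcard hm
    _ ≤ k * ∑ i ∈ B, |x i| := by gcongr; simpa using sum_le_sum hB

theorem sum_sq_le_mul_sum_sq_of_sum_abs_le (hm : 0 ≤ m) (hk : 0 ≤ k)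
    (hA : ∀ j ∈ A, |x j| ≤ m) (hB : ∀ i ∈ B, m ≤ |x i|)
    (hsum : ∑ j ∈ A, |x j| ≤ k * ∑ i ∈ B, |x i|) :
    ∑ j ∈ A, x j ^ 2 ≤ k * ∑ i ∈ B, x i ^ 2 :=
  calc ∑ j ∈ A, x j ^ 2 ≤ ∑ j ∈ A, m * |x j| := by
        gcongr with j hj
        rw [← sq_abs, sq]
        exact mul_le_mul_of_nonneg_right (hA j hj) (abs_nonneg _)
    _ ≤ m * (k * ∑ i ∈ B, |x i|) := by rw [← mul_sum]; gcongr
    _ = k * ∑ i ∈ B, m * |x i| := by rw [← mul_sum]; ring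
    _ ≤ k * ∑ i ∈ B, x i ^ 2 := by
        gcongr with i hi
        rw [← sq_abs, sq]
        exact mul_le_mul_of_nonneg_right (hB i hi) (abs_nonneg _)

end Finset

theorem exists_card_le_sum_compl_le_mul_sum {ι : Type*} [Fintype ι] [DecidableEq ι]
    (t : ι → ℝ) {s k : ℕ} (ht : Fintype.card {i // t i ≠ 0} ≤ (k + 1) * s) :
    ∃ J : Finset ι, #J ≤ s ∧ ∑ j ∈ Jᶜ, |t j| ≤ k * ∑ j ∈ J, |t j| ∧
      ∑ j ∈ Jᶜ, t j ^ 2 ≤ k * ∑ j ∈ J, t j ^ 2 := by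
  set T : Finset ι := {i | t i ≠ 0}
  have hT : #T ≤ (k + 1) * s := by rwa [Fintype.card_subtype] at ht
  obtain ⟨J, hJT, hJcard, hJtop⟩ :=
    exists_subset_card_eq_forall_mem_sdiff_le (fun i => |t i|) (min_le_right s #T)
  have hsupp : ∀ g : ℝ → ℝ, g 0 = 0 → ∑ j ∈ Jᶜ, g (t j) = ∑ j ∈ T \ J, g (t j) := by
    intro g hg
    refine (sum_subset (fun j hj => mem_compl.2 (mem_sdiff.1 hj).2) fun j hj hjT => ?_).symm
    have : t j = 0 := by
      by_contra h
      exact hjT (mem_sdiff.2 ⟨by simpa [T] using h, mem_compl.1 hj⟩)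
    rw [this, hg]
  refine ⟨J, hJcard ▸ min_le_left _ _, ?_⟩
  rw [hsupp (fun x => |x|) abs_zero, hsupp (· ^ 2) (zero_pow two_ne_zero)]
  rcases (T \ J).eq_empty_or_nonempty with hempty | ⟨j₀, hj₀⟩
  · simp only [hempty, sum_empty]
    exact ⟨by positivity, by positivity⟩
  have hJT_lt : #J < #T := by
    have := card_pos.2 ⟨j₀, hj₀⟩
    rw [card_sdiff_of_subset hJT] at this
    omega
  have hJs : #J = s := by omega
  have hJne : J.Nonempty := by
    rw [← card_pos, hJs]
    refine Nat.pos_of_ne_zero fun hs => ?_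
    rw [hs, mul_zero] at hT
    omega
  set m := J.inf' hJne fun i => |t i|
  have hm : 0 ≤ m := le_inf' _ _ fun _ _ => abs_nonneg _
  have hA : ∀ j ∈ T \ J, |t j| ≤ m := fun j hj => le_inf' _ _ fun i hi => hJtop i hi j hj
  have hB : ∀ i ∈ J, m ≤ |t i| := fun i hi => inf'_le _ hi
  have hcard : #(T \ J) ≤ k * #J := by
    rw [card_sdiff_of_subset hJT, hJs]
    rw [add_one_mul] at hT
    omega
  have hl1 := sum_abs_le_mul_sum_abs_of_card_le hm k.cast_nonneg hA hB (by exact_mod_cast hcard)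
  exact ⟨hl1, sum_sq_le_mul_sum_sq_of_sum_abs_le hm k.cast_nonneg hA hB hl1⟩

theorem stmt6_general {p s₀ k₀ : ℕ} (S0 : Matrix (Fin p) (Fin p) ℝ)
    (K : ℝ) (hK : 0 < K)
    (hRE : ∀ J : Finset (Fin p), J.card ≤ s₀ →
      ∀ υ : Fin p → ℝ, υ ≠ 0 →
        (∑ j ∈ Jᶜ, |υ j|) ≤ (k₀ : ℝ) * ∑ j ∈ J, |υ j| →
        Real.sqrt (∑ j ∈ J, υ j ^ 2) / K ≤ Real.sqrt (υ ⬝ᵥ S0.mulVec υ)) :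
    ∀ t : Fin p → ℝ, t ≠ 0 → Fintype.card {i // t i ≠ 0} ≤ (k₀ + 1) * s₀ →
      1 / (Real.sqrt (2 + (k₀ : ℝ) ^ 2) * K) ≤
        Real.sqrt ((t ⬝ᵥ S0.mulVec t) / ∑ i, t i ^ 2) := by
  intro t ht hcard
  obtain ⟨J, hJs, hl1, hl2⟩ := exists_card_le_sum_compl_le_mul_sum t hcard
  have hRE_t := (div_le_iff₀ hK).1 (hRE J hJs t ht hl1)
  obtain ⟨i, hi⟩ := Function.ne_iff.1 ht
  replace hi : t i ≠ 0 := hi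
  have hN : 0 < ∑ i, t i ^ 2 := sum_pos' (fun _ _ => sq_nonneg _) ⟨i, mem_univ _, by positivity⟩
  have hsplit : ∑ i, t i ^ 2 ≤ (2 + (k₀ : ℝ) ^ 2) * ∑ j ∈ J, t j ^ 2 := by
    rw [← sum_add_sum_compl J]
    nlinarith [sq_nonneg ((k₀ : ℝ) - 1), (k₀.cast_nonneg : (0 : ℝ) ≤ k₀),
      sum_nonneg fun j (_ : j ∈ J) => sq_nonneg (t j)]
  rw [Real.sqrt_div' _ hN.le, div_le_div_iff₀ (by positivity) (Real.sqrt_pos.2 hN), one_mul]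
  calc √(∑ i, t i ^ 2) ≤ √(2 + (k₀ : ℝ) ^ 2) * √(∑ j ∈ J, t j ^ 2) := by
        rw [← Real.sqrt_mul (by positivity)]; exact Real.sqrt_le_sqrt hsplit
    _ ≤ √(2 + (k₀ : ℝ) ^ 2) * (√(t ⬝ᵥ S0 *ᵥ t) * K) := by gcongr
    _ = √(t ⬝ᵥ S0 *ᵥ t) * (√(2 + (k₀ : ℝ) ^ 2) * K) := by ring

/-- Under the restricted eigenvalue condition `RE(s₀, k₀, S0)` with constant `K`,
every nonzero `(k₀+1)s₀`-sparse vector `t` satisfies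
`sqrt(tᵀS0t / ‖t‖₂²) ≥ 1/(sqrt(2+k₀²)·K)`, i.e.
`sqrt(ρ_min((k₀+1)s₀)) ≥ 1/(sqrt(2+k₀²)·K)`. -/
theorem stmt6 {p s₀ k₀ : ℕ} (S0 : Matrix (Fin p) (Fin p) ℝ)
    (hS : S0.PosSemidef) (hs₀ : 1 ≤ s₀) (hk₀ : 0 < k₀)
    (K : ℝ) (hK : 0 < K)
    (hRE : ∀ J : Finset (Fin p), J.card ≤ s₀ →
      ∀ υ : Fin p → ℝ, υ ≠ 0 →
        (∑ j ∈ Jᶜ, |υ j|) ≤ (k₀ : ℝ) * ∑ j ∈ J, |υ j| →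
        Real.sqrt (∑ j ∈ J, υ j ^ 2) / K ≤ Real.sqrt (υ ⬝ᵥ S0.mulVec υ)) :
    ∀ t : Fin p → ℝ, t ≠ 0 → Fintype.card {i // t i ≠ 0} ≤ (k₀ + 1) * s₀ →
      1 / (Real.sqrt (2 + (k₀ : ℝ) ^ 2) * K) ≤
        Real.sqrt ((t ⬝ᵥ S0.mulVec t) / ∑ i, t i ^ 2) :=
  stmt6_general S0 K hK hRE
end

section
/- Let Θ₀ be symmetric positive definite and Δ symmetric, with Θ₀ + vΔ positive definite for all v in an open interval containing [0,1]. Then log det(Θ₀ + Δ) − log det(Θ₀) = tr(Θ₀⁻¹Δ) − vec(Δ)ᵀ (∫₀¹ (1−v) (Θ₀+vΔ)⁻¹ ⊗ (Θ₀+vΔ)⁻¹ dv) vec(Δ), where ⊗ is the Kronecker product and vec stacks matrix entries into a vector. -/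
/-!
Write `f v = log det (Θ₀ + vΔ)`. Jacobi's formula, obtained from
`det (A + tB) = det A · det (1 + t A⁻¹B)` and the first-order expansion of `det (1 + tM)`, gives
`f' v = tr ((Θ₀ + vΔ)⁻¹ Δ)`; differentiating the inverse gives
`f'' v = -tr ((Θ₀ + vΔ)⁻¹ Δ (Θ₀ + vΔ)⁻¹ Δ)`. First-order Taylor expansion with integral remainder
on `[0, 1]` then yields the formula, since for symmetric `M` and `N` the Kronecker quadratic form
`vec(N)ᵀ (M ⊗ M) vec(N)` equals `tr (M N M N)`.
-/

open Matrix Kronecker Polynomial Set MeasureTheory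

theorem taylor_integral_remainder_one_of_hasDerivAt {f f' f'' : ℝ → ℝ} {a b : ℝ}
    (hf : ∀ x ∈ uIcc a b, HasDerivAt f (f' x) x)
    (hf' : ∀ x ∈ uIcc a b, HasDerivAt f' (f'' x) x)
    (hf'' : IntervalIntegrable f'' volume a b) :
    f b - f a = f' a * (b - a) + ∫ x in a..b, (b - x) * f'' x := by
  have hf'_int : IntervalIntegrable f' volume a b :=
    ContinuousOn.intervalIntegrable fun x hx => (hf' x hx).continuousAt.continuousWithinAt
  have hparts := intervalIntegral.integral_mul_deriv_eq_deriv_mul hf'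
    (fun x _ => (hasDerivAt_id' x).sub_const b) hf'' (intervalIntegrable_const (c := (1 : ℝ)))
  have hrem : ∫ x in a..b, f'' x * (x - b) = -∫ x in a..b, (b - x) * f'' x := by
    rw [← intervalIntegral.integral_neg]
    congr 1
    ext x
    ring
  simp only [mul_one] at hparts
  rw [← intervalIntegral.integral_eq_sub_of_hasDerivAt hf hf'_int, hparts, hrem]
  ring

section Det

variable {𝕜 : Type*} [NontriviallyNormedField 𝕜] {n : Type*} [Fintype n] [DecidableEq n]

theorem Matrix.hasDerivAt_det_one_add_smul (M : Matrix n n 𝕜) :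
    HasDerivAt (fun t : 𝕜 => (1 + t • M).det) M.trace 0 := by
  have hpoly : (fun t : 𝕜 => (1 + t • M).det) =
      fun t => (det (1 + (X : 𝕜[X]) • M.map C)).eval t := by
    ext t
    simp [eval_det, ← smul_eq_mul_diagonal]
  rw [hpoly, ← derivative_det_one_add_X_smul]
  exact Polynomial.hasDerivAt _ 0

theorem Matrix.hasDerivAt_det_add_smul {A B : Matrix n n 𝕜} {t₀ : 𝕜}
    (h : IsUnit (A + t₀ • B).det) :
    HasDerivAt (fun t : 𝕜 => (A + t • B).det)
      ((A + t₀ • B).det * ((A + t₀ • B)⁻¹ * B).trace) t₀ := by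
  set C := A + t₀ • B with hC
  have hfactor : ∀ t : 𝕜, A + t • B = C * (1 + (t - t₀) • (C⁻¹ * B)) := fun t => by
    rw [Matrix.mul_add, Matrix.mul_one, Matrix.mul_smul, mul_nonsing_inv_cancel_left _ _ h,
      sub_smul, hC]
    abel
  have hshift := HasDerivAt.comp_sub_const t₀ t₀
    (by rw [sub_self]; exact hasDerivAt_det_one_add_smul (C⁻¹ * B))
  simpa only [hfactor, det_mul] using hshift.const_mul C.det

end Det

theorem Matrix.hasDerivAt_log_det_add_smul {n : Type*} [Fintype n] [DecidableEq n]
    {A B : Matrix n n ℝ} {t₀ : ℝ} (h : (A + t₀ • B).det ≠ 0) :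
    HasDerivAt (fun t : ℝ => Real.log (A + t • B).det) ((A + t₀ • B)⁻¹ * B).trace t₀ := by
  convert (hasDerivAt_det_add_smul h.isUnit).log h using 1
  field_simp

section Inverse

-- A matrix norm is needed to differentiate the inverse; the statements only see the product
-- topology, which it induces.
attribute [local instance] Matrix.linftyOpNormedAddCommGroup Matrix.linftyOpNormedRing
  Matrix.linftyOpNormedAlgebra

variable {𝕜 : Type*} [RCLike 𝕜] {n : Type*} [Fintype n] [DecidableEq n]

theorem Matrix.hasDerivAt_inv_add_smul {A B : Matrix n n 𝕜} {t₀ : 𝕜}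
    (h : IsUnit (A + t₀ • B)) :
    HasDerivAt (fun t : 𝕜 => (A + t • B)⁻¹) (-((A + t₀ • B)⁻¹ * B * (A + t₀ • B)⁻¹)) t₀ := by
  have hline : HasDerivAt (fun t : 𝕜 => A + t • B) B t₀ := by
    have := ((hasDerivAt_id t₀).smul_const B).const_add A
    simp only [id, one_smul] at this
    exact this
  have hinv := (hasFDerivAt_ringInverse (𝕜 := 𝕜) h.unit).comp_hasDerivAt t₀ hline
  simp only [Function.comp_def, ← nonsing_inv_eq_ringInverse, coe_units_inv,
    IsUnit.unit_spec] at hinv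
  exact hinv

theorem Matrix.hasDerivAt_trace_inv_add_smul_mul {A B : Matrix n n 𝕜} {t₀ : 𝕜}
    (h : IsUnit (A + t₀ • B)) :
    HasDerivAt (fun t : 𝕜 => ((A + t • B)⁻¹ * B).trace)
      (-((A + t₀ • B)⁻¹ * B * ((A + t₀ • B)⁻¹ * B)).trace) t₀ := by
  have htrace : HasDerivAt (fun t : 𝕜 => ((A + t • B)⁻¹ * B).trace)
      (-((A + t₀ • B)⁻¹ * B * (A + t₀ • B)⁻¹) * B).trace t₀ :=
    (traceLinearMap n 𝕜 𝕜).toContinuousLinearMap.hasFDerivAt.comp_hasDerivAt t₀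
      ((hasDerivAt_inv_add_smul h).mul_const B)
  simpa only [neg_mul, trace_neg, Matrix.mul_assoc] using htrace

end Inverse

theorem Matrix.log_det_add_sub_log_det {n : Type*} [Fintype n] [DecidableEq n]
    {A B : Matrix n n ℝ} (h : ∀ t ∈ uIcc (0 : ℝ) 1, IsUnit (A + t • B)) :
    Real.log (A + B).det - Real.log A.det = (A⁻¹ * B).trace -
      ∫ t in (0 : ℝ)..1, (1 - t) * ((A + t • B)⁻¹ * B * ((A + t • B)⁻¹ * B)).trace := by
  have hdet : ∀ t ∈ uIcc (0 : ℝ) 1, (A + t • B).det ≠ 0 := fun t ht =>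
    ((isUnit_iff_isUnit_det _).mp (h t ht)).ne_zero
  have hcont : ContinuousOn (fun t : ℝ => ((A + t • B)⁻¹ * B * ((A + t • B)⁻¹ * B)).trace)
      (uIcc 0 1) := fun t ht => by
    have hinv : ContinuousAt (fun t : ℝ => (A + t • B)⁻¹) t := by
      refine (continuousAt_matrix_inv _ ?_).comp (by fun_prop)
      rw [Ring.inverse_eq_inv']
      exact continuousAt_inv₀ (hdet t ht)
    exact (continuous_id.matrix_trace.continuousAt.comp
      ((hinv.mul continuousAt_const).mul (hinv.mul continuousAt_const))).continuousWithinAt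
  have htaylor := taylor_integral_remainder_one_of_hasDerivAt
    (fun t ht => hasDerivAt_log_det_add_smul (hdet t ht))
    (fun t ht => hasDerivAt_trace_inv_add_smul_mul (h t ht)) hcont.neg.intervalIntegrable
  simp only [one_smul, zero_smul, add_zero, sub_zero, mul_one, mul_neg,
    intervalIntegral.integral_neg] at htaylor
  rw [htaylor, sub_eq_add_neg]

theorem Matrix.vec_dotProduct_kronecker_mulVec_vec_of_isSymm {R : Type*} [CommSemiring R]
    {n : Type*} [Fintype n] {M N : Matrix n n R} (hM : M.IsSymm) (hN : N.IsSymm) :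
    vec N ⬝ᵥ (M ⊗ₖ M) *ᵥ vec N = (M * N * (M * N)).trace := by
  rw [kronecker_mulVec_vec, vec_dotProduct_vec, hM.eq, hN.eq, trace_mul_comm, Matrix.mul_assoc]

theorem stmt11_general {p : ℕ} (Θ₀ Δ : Matrix (Fin p) (Fin p) ℝ)
    (hΔ : Δ.IsHermitian)
    (a b : ℝ) (ha : a < 0) (hb : 1 < b)
    (hpd : ∀ v ∈ Set.Ioo a b, (Θ₀ + v • Δ).PosDef) :
    Real.log (Θ₀ + Δ).det - Real.log Θ₀.det
      = (Θ₀⁻¹ * Δ).trace -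
        ∫ v in (0 : ℝ)..1, (1 - v) *
          ((fun ij : Fin p × Fin p => Δ ij.1 ij.2) ⬝ᵥ
            (((Θ₀ + v • Δ)⁻¹ ⊗ₖ (Θ₀ + v • Δ)⁻¹).mulVec
              (fun ij : Fin p × Fin p => Δ ij.1 ij.2))) := by
  have hsegment : uIcc (0 : ℝ) 1 ⊆ Ioo a b := by
    rw [uIcc_of_le zero_le_one]
    exact fun v hv => ⟨ha.trans_le hv.1, hv.2.trans_lt hb⟩
  have hΔsymm : Δ.IsSymm := isHermitian_iff_isSymm.mp hΔ
  -- The statement stacks rows, Mathlib's `vec` stacks columns; they agree as `Δ` is symmetric.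
  have hvec : (fun ij : Fin p × Fin p => Δ ij.1 ij.2) = vec Δ :=
    funext fun ij => hΔsymm.apply ij.2 ij.1
  rw [log_det_add_sub_log_det fun v hv => (hpd v (hsegment hv)).isUnit, hvec]
  congr 1
  refine intervalIntegral.integral_congr fun v hv => ?_
  have hinv_symm : (Θ₀ + v • Δ)⁻¹.IsSymm :=
    (isHermitian_iff_isSymm.mp (hpd v (hsegment hv)).isHermitian).inv
  simp only [vec_dotProduct_kronecker_mulVec_vec_of_isSymm hinv_symm hΔsymm]

/-- Taylor expansion with integral remainder for the log-determinant: if `Θ₀ + vΔ ≻ 0` for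
all `v` in an open interval containing `[0,1]`, then
`log det(Θ₀+Δ) − log det Θ₀ = tr(Θ₀⁻¹Δ) − ∫₀¹ (1−v)·vec(Δ)ᵀ((Θ₀+vΔ)⁻¹⊗(Θ₀+vΔ)⁻¹)vec(Δ) dv`. -/
theorem stmt11 {p : ℕ} (Θ₀ Δ : Matrix (Fin p) (Fin p) ℝ)
    (h0 : Θ₀.PosDef) (hΔ : Δ.IsHermitian)
    (a b : ℝ) (ha : a < 0) (hb : 1 < b)
    (hpd : ∀ v ∈ Set.Ioo a b, (Θ₀ + v • Δ).PosDef) :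
    Real.log (Θ₀ + Δ).det - Real.log Θ₀.det
      = (Θ₀⁻¹ * Δ).trace -
        ∫ v in (0 : ℝ)..1, (1 - v) *
          ((fun ij : Fin p × Fin p => Δ ij.1 ij.2) ⬝ᵥ
            (((Θ₀ + v • Δ)⁻¹ ⊗ₖ (Θ₀ + v • Δ)⁻¹).mulVec
              (fun ij : Fin p × Fin p => Δ ij.1 ij.2))) :=
  stmt11_general Θ₀ Δ hΔ a b ha hb hpd
end

section
/- Let Θ₀ be symmetric positive definite and Δ symmetric with Θ₀ + vΔ ≻ 0 for v ∈ [0,1]. Then vec(Δ)ᵀ (∫₀¹ (1−v)(Θ₀+vΔ)⁻¹⊗(Θ₀+vΔ)⁻¹ dv) vec(Δ) ≥ ‖Δ‖_F² / (2 (λ_max(Θ₀) + ‖Δ‖₂)²). -/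
/-! For `v ∈ [0, 1]` we have `Θ₀ + vΔ ≤ M • 1` in the Loewner order, with
`M = λ_max(Θ₀) + ‖Δ‖₂`. Inversion is antitone on positive definite matrices, so
`(Θ₀ + vΔ)⁻¹ ≥ M⁻¹ • 1`, and the Kronecker product is monotone on positive semidefinite
matrices, so `(Θ₀ + vΔ)⁻¹ ⊗ (Θ₀ + vΔ)⁻¹ ≥ M⁻² • 1`. The integrand is therefore at least
`(1 - v) ‖Δ‖_F² / M²`, and `∫₀¹ (1 - v) dv = 1 / 2`. -/

open Matrix Kronecker

noncomputable def frob {p : ℕ} (A : Matrix (Fin p) (Fin p) ℝ) : ℝ :=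
  Real.sqrt (∑ i, ∑ j, (A i j) ^ 2)

open Set
open scoped MatrixOrder ComplexOrder

section Continuity

variable {X R l m n p : Type*} [TopologicalSpace X] [TopologicalSpace R]

theorem Continuous.matrix_kronecker [Mul R] [ContinuousMul R] {A : X → Matrix l m R}
    {B : X → Matrix n p R} (hA : Continuous A) (hB : Continuous B) :
    Continuous fun x => A x ⊗ₖ B x :=
  continuous_pi fun _ => continuous_pi fun _ => (hA.matrix_elem _ _).mul (hB.matrix_elem _ _)

theorem ContinuousOn.matrix_inv [Field R] [IsTopologicalDivisionRing R] [Fintype n]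
    [DecidableEq n] {A : X → Matrix n n R} {s : Set X} (hA : ContinuousOn A s)
    (hdet : ∀ x ∈ s, (A x).det ≠ 0) : ContinuousOn (fun x => (A x)⁻¹) s := fun x hx =>
  (continuousAt_matrix_inv _ <| by
      simpa only [Ring.inverse_eq_inv'] using continuousAt_inv₀ (hdet x hx)
    ).comp_continuousWithinAt (hA x hx)

end Continuity

namespace Matrix

variable {𝕜 n m : Type*} [RCLike 𝕜] [Fintype n] [Fintype m]

theorem kronecker_le_kronecker {A B : Matrix n n 𝕜} {C D : Matrix m m 𝕜} (hAB : A ≤ B)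
    (hCD : C ≤ D) (hA : 0 ≤ A) (hC : 0 ≤ C) : A ⊗ₖ C ≤ B ⊗ₖ D := by
  have key : B ⊗ₖ D - A ⊗ₖ C = (B - A) ⊗ₖ D + A ⊗ₖ (D - C) := by
    ext ⟨i, j⟩ ⟨k, l⟩
    simp only [sub_apply, add_apply, kroneckerMap_apply]
    ring
  rw [le_iff, key]
  exact ((le_iff.1 hAB).kronecker (hC.trans hCD).posSemidef).add
    (hA.posSemidef.kronecker (le_iff.1 hCD))

variable [DecidableEq n]

theorem IsHermitian.le_smul_one_of_eigenvalues_le {A : Matrix n n 𝕜} (hA : A.IsHermitian)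
    {c : ℝ} (h : ∀ i, hA.eigenvalues i ≤ c) : A ≤ c • 1 := by
  rw [← Algebra.algebraMap_eq_smul_one]
  refine le_algebraMap_of_spectrum_le (fun x hx => ?_) hA.isSelfAdjoint
  rw [hA.spectrum_real_eq_range_eigenvalues] at hx
  obtain ⟨i, rfl⟩ := hx
  exact h i

theorem add_smul_le_smul_one {A B : Matrix n n 𝕜} {a b v : ℝ} (hA : A ≤ a • 1) (hB : B ≤ b • 1)
    (hb : 0 ≤ b) (hv : v ∈ Icc (0 : ℝ) 1) : A + v • B ≤ (a + b) • 1 := by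
  rw [add_smul]
  gcongr
  calc v • B ≤ v • (b • (1 : Matrix n n 𝕜)) := smul_le_smul_of_nonneg_left hB hv.1
    _ ≤ b • 1 := by
      rw [smul_smul]
      exact smul_le_smul_of_nonneg_right (mul_le_of_le_one_left hb hv.2) zero_le_one

theorem PosDef.smul_one_le_inv {A : Matrix n n 𝕜} (hA : A.PosDef) {M : ℝ}
    (hAM : A ≤ M • 1) : M⁻¹ • 1 ≤ A⁻¹ := by
  rw [← Algebra.algebraMap_eq_smul_one] at hAM ⊢
  have hspec := (le_algebraMap_iff_spectrum_le hA.isHermitian.isSelfAdjoint).1 hAM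
  refine algebraMap_le_of_le_spectrum (fun x hx => ?_) hA.inv.isHermitian.isSelfAdjoint
  have hx' : x⁻¹ ∈ spectrum ℝ A := by
    have := spectrum.map_inv (𝕜 := ℝ) hA.isUnit.unit
    rw [coe_units_inv, IsUnit.unit_spec] at this
    rwa [← Set.mem_inv, this]
  exact inv_le_of_inv_le₀ (inv_pos.1 (hA.isStrictlyPositive.spectrum_pos hx')) (hspec _ hx')

theorem PosDef.smul_one_le_inv_kronecker_inv {A : Matrix n n 𝕜} (hA : A.PosDef) {M : ℝ}
    (hM : 0 < M) (hAM : A ≤ M • 1) : (M ^ 2)⁻¹ • 1 ≤ A⁻¹ ⊗ₖ A⁻¹ := by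
  have hinv := hA.smul_one_le_inv hAM
  have h0 : (0 : Matrix n n 𝕜) ≤ M⁻¹ • 1 :=
    smul_nonneg (inv_nonneg.2 hM.le) PosSemidef.one.nonneg
  have := kronecker_le_kronecker hinv hinv h0 h0
  rwa [smul_kronecker, kronecker_smul, one_kronecker_one, smul_smul, ← mul_inv, ← sq] at this

theorem mul_dotProduct_self_le_of_smul_one_le {K : Matrix n n ℝ} {c : ℝ} (h : c • 1 ≤ K)
    (x : n → ℝ) : c * (x ⬝ᵥ x) ≤ x ⬝ᵥ K *ᵥ x := by
  simpa only [star_trivial, sub_mulVec, smul_mulVec, one_mulVec, dotProduct_sub,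
    dotProduct_smul, smul_eq_mul, sub_nonneg] using (le_iff.1 h).dotProduct_mulVec_nonneg x

end Matrix

theorem intervalIntegral.div_two_le_integral_one_sub_mul {f : ℝ → ℝ} {c : ℝ}
    (hf : ContinuousOn f (Icc 0 1)) (h : ∀ v ∈ Icc (0 : ℝ) 1, c ≤ f v) :
    c / 2 ≤ ∫ v in (0 : ℝ)..1, (1 - v) * f v := by
  have hint : ∫ v in (0 : ℝ)..1, (1 - v) * c = c / 2 := by
    rw [intervalIntegral.integral_mul_const,
      intervalIntegral.integral_comp_sub_left (fun v => v)]
    norm_num [integral_id]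
    ring
  rw [← hint]
  refine intervalIntegral.integral_mono_on zero_le_one
    (Continuous.intervalIntegrable (by fun_prop) _ _) ?_ fun v hv => ?_
  · refine ContinuousOn.intervalIntegrable ?_
    rw [uIcc_of_le zero_le_one]
    exact (continuousOn_const.sub continuousOn_id).mul hf
  · exact mul_le_mul_of_nonneg_left (h v hv) (sub_nonneg.2 hv.2)

theorem frob_sq_eq_dotProduct {p : ℕ} (A : Matrix (Fin p) (Fin p) ℝ) :
    frob A ^ 2 = (fun ij : Fin p × Fin p => A ij.1 ij.2) ⬝ᵥ (fun ij => A ij.1 ij.2) := by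
  rw [frob, Real.sq_sqrt (by positivity), dotProduct, Fintype.sum_prod_type]
  simp only [sq]

/-- If `Θ₀ + vΔ ≻ 0` on `[0,1]`, then
`vec(Δ)ᵀ(∫₀¹(1−v)(Θ₀+vΔ)⁻¹⊗(Θ₀+vΔ)⁻¹ dv)vec(Δ) ≥ ‖Δ‖_F²/(2(λ_max(Θ₀)+‖Δ‖₂)²)`,
with `‖Δ‖₂` the largest absolute eigenvalue of the symmetric matrix `Δ`. -/
theorem stmt12 {p : ℕ} [NeZero p] (Θ₀ Δ : Matrix (Fin p) (Fin p) ℝ)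
    (h0 : Θ₀.PosDef) (hΔ : Δ.IsHermitian)
    (hpd : ∀ v ∈ Set.Icc (0 : ℝ) 1, (Θ₀ + v • Δ).PosDef) :
    frob Δ ^ 2 /
        (2 * ((⨆ i, h0.isHermitian.eigenvalues i) + (⨆ i, |hΔ.eigenvalues i|)) ^ 2)
      ≤ ∫ v in (0 : ℝ)..1, (1 - v) *
          ((fun ij : Fin p × Fin p => Δ ij.1 ij.2) ⬝ᵥ
            (((Θ₀ + v • Δ)⁻¹ ⊗ₖ (Θ₀ + v • Δ)⁻¹).mulVec
              (fun ij : Fin p × Fin p => Δ ij.1 ij.2))) := by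
  rw [frob_sq_eq_dotProduct]
  set x : Fin p × Fin p → ℝ := fun ij => Δ ij.1 ij.2
  set lam := ⨆ i, h0.isHermitian.eigenvalues i
  set s := ⨆ i, |hΔ.eigenvalues i|
  have hΘ₀ : Θ₀ ≤ lam • 1 := h0.isHermitian.le_smul_one_of_eigenvalues_le fun i =>
    le_ciSup (Finite.bddAbove_range _) i
  have hΔs : Δ ≤ s • 1 := hΔ.le_smul_one_of_eigenvalues_le fun i =>
    (le_abs_self _).trans
      (le_ciSup (f := fun i => |hΔ.eigenvalues i|) (Finite.bddAbove_range _) i)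
  have hs : 0 ≤ s := Real.iSup_nonneg fun i => abs_nonneg _
  have hM : 0 < lam + s := add_pos_of_pos_of_nonneg
    ((h0.eigenvalues_pos 0).trans_le (le_ciSup (Finite.bddAbove_range _) 0)) hs
  have hcont : ContinuousOn (fun v : ℝ => x ⬝ᵥ ((Θ₀ + v • Δ)⁻¹ ⊗ₖ (Θ₀ + v • Δ)⁻¹) *ᵥ x)
      (Icc 0 1) :=
    (continuous_const.dotProduct ((continuous_id.matrix_kronecker continuous_id).matrix_mulVec
      continuous_const)).comp_continuousOn
      (ContinuousOn.matrix_inv (by fun_prop) fun v hv => (hpd v hv).det_pos.ne')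
  rw [show x ⬝ᵥ x / (2 * (lam + s) ^ 2) = ((lam + s) ^ 2)⁻¹ * (x ⬝ᵥ x) / 2 by
    rw [mul_comm 2, ← div_div, inv_mul_eq_div]]
  exact intervalIntegral.div_two_le_integral_one_sub_mul hcont fun v hv =>
    mul_dotProduct_self_le_of_smul_one_le
      ((hpd v hv).smul_one_le_inv_kronecker_inv hM (add_smul_le_smul_one hΘ₀ hΔs hs hv)) x
end

section
/- Let Θ₀ be symmetric positive definite with λ_min(Θ₀) ≥ c > 0 and Δ₀ symmetric with ‖Δ₀‖₂ ≤ c/32 and Θ₀ + Δ₀ ≻ 0. Then 0 ≤ tr(Δ₀ Θ₀⁻¹) − (log det(Θ₀+Δ₀) − log det Θ₀) ≤ ‖Δ₀‖_F² / (2(31c/32)²). -/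
/-!
Whiten the perturbation: with `W = Θ₀^{-1/2} Δ₀ Θ₀^{-1/2}` and `μ` its eigenvalues,
`tr(Δ₀ Θ₀⁻¹) = Σ μᵢ` and `det(Θ₀ + Δ₀) = det Θ₀ · ∏ (1 + μᵢ)` (Sylvester), so the excess risk is
`Σ (μᵢ - log(1 + μᵢ))`. Conjugating the Loewner bounds `-c/32 ≤ Δ₀ ≤ c/32` and `Θ₀⁻¹ ≤ 1/c` by
`Θ₀^{-1/2}` gives `|μᵢ| ≤ 1/32`, and `Σ μᵢ² = tr(Δ₀ Θ₀⁻¹ Δ₀ Θ₀⁻¹) ≤ ‖Δ₀‖_F² / c²`. Each summand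
lies between `0` and `x²/2 + |x|³/(1 - |x|) ≤ (33/62) x²`, and `33/62 ≤ 1 / (2 (31/32)²)`.
-/

open Matrix

open scoped MatrixOrder

lemma Real.sub_log_one_add_le {x t : ℝ} (ht : t < 1) (hx : |x| ≤ t) :
    x - Real.log (1 + x) ≤ (1 / 2 + t / (1 - t)) * x ^ 2 := by
  have ht0 : 0 ≤ t := (abs_nonneg x).trans hx
  have hx1 : |x| < 1 := hx.trans_lt ht
  have taylor := Real.abs_log_sub_add_sum_range_le (x := -x) (by rwa [abs_neg]) 2
  norm_num [Finset.sum_range_succ] at taylor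
  have hcube : |x| ^ 3 / (1 - |x|) ≤ t / (1 - t) * x ^ 2 := by
    rw [div_mul_eq_mul_div, div_le_div_iff₀ (by linarith) (by linarith),
      show |x| ^ 3 = |x| * x ^ 2 by rw [pow_succ, sq_abs]; ring]
    have := mul_le_mul hx (sub_le_sub_left hx 1) (by linarith) (by linarith)
    nlinarith [sq_nonneg x]
  linarith [(neg_le_abs _).trans taylor]

namespace Matrix

variable {n : Type*} [Fintype n] [DecidableEq n]

lemma IsHermitian.le_algebraMap_iff {A : Matrix n n ℝ} (hA : A.IsHermitian) {r : ℝ} :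
    A ≤ algebraMap ℝ _ r ↔ ∀ i, hA.eigenvalues i ≤ r := by
  rw [le_algebraMap_iff_spectrum_le hA.isSelfAdjoint, hA.spectrum_real_eq_range_eigenvalues]
  simp

lemma IsHermitian.algebraMap_le_iff {A : Matrix n n ℝ} (hA : A.IsHermitian) {r : ℝ} :
    algebraMap ℝ _ r ≤ A ↔ ∀ i, r ≤ hA.eigenvalues i := by
  rw [algebraMap_le_iff_le_spectrum hA.isSelfAdjoint, hA.spectrum_real_eq_range_eigenvalues]
  simp

lemma IsHermitian.forall_abs_eigenvalues_le_iff {A : Matrix n n ℝ} (hA : A.IsHermitian) {r : ℝ} :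
    (∀ i, |hA.eigenvalues i| ≤ r) ↔ -algebraMap ℝ _ r ≤ A ∧ A ≤ algebraMap ℝ _ r := by
  simp only [← map_neg, hA.algebraMap_le_iff, hA.le_algebraMap_iff, abs_le, forall_and]

lemma IsHermitian.trace_cfc {A : Matrix n n ℝ} (hA : A.IsHermitian) (f : ℝ → ℝ) :
    (cfc f A).trace = ∑ i, f (hA.eigenvalues i) := by
  rw [hA.cfc_eq, IsHermitian.cfc, Unitary.conjStarAlgAut_apply, trace_mul_cycle,
    Unitary.coe_star_mul_self, one_mul, trace_diagonal]
  simp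

lemma IsHermitian.det_cfc {A : Matrix n n ℝ} (hA : A.IsHermitian) (f : ℝ → ℝ) :
    (cfc f A).det = ∏ i, f (hA.eigenvalues i) := by
  rw [hA.cfc_eq]
  simp [IsHermitian.cfc, -Unitary.conjStarAlgAut_apply]

lemma PosDef.inv_le_algebraMap_inv {A : Matrix n n ℝ} (hA : A.PosDef) {c : ℝ} (hc : 0 < c)
    (h : algebraMap ℝ _ c ≤ A) : A⁻¹ ≤ algebraMap ℝ _ c⁻¹ := by
  have hspec := (algebraMap_le_iff_le_spectrum hA.isHermitian.isSelfAdjoint).1 h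
  rw [nonsing_inv_eq_ringInverse,
    ← cfc_ringInverse_id (R := ℝ) (a := A) hA.isUnit hA.isHermitian.isSelfAdjoint]
  exact cfc_le_algebraMap _ _ _ (fun x hx => inv_anti₀ hc (hspec x hx))
    (continuousOn_inv₀.mono fun x hx => (hc.trans_le (hspec x hx)).ne')

lemma trace_star_mul_mul_le {A : Matrix n n ℝ} {a : ℝ} (h : A ≤ algebraMap ℝ _ a)
    (X : Matrix n n ℝ) : (star X * A * X).trace ≤ a * (star X * X).trace := by
  have := star_left_conjugate_le_conjugate h X
  rw [Algebra.algebraMap_eq_smul_one, mul_smul_comm, mul_one, smul_mul_assoc] at this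
  have := (le_iff.1 this).trace_nonneg
  rw [trace_sub, trace_smul, smul_eq_mul] at this
  linarith

lemma PosDef.sqrt_inv_mul_sqrt_inv {A : Matrix n n ℝ} (hA : A.PosDef) :
    CFC.sqrt A⁻¹ * CFC.sqrt A⁻¹ = A⁻¹ :=
  CFC.sqrt_mul_sqrt_self _ hA.inv.posSemidef.nonneg

noncomputable def whiten (Θ Δ : Matrix n n ℝ) : Matrix n n ℝ :=
  CFC.sqrt Θ⁻¹ * Δ * CFC.sqrt Θ⁻¹

section whiten

variable {Θ Δ : Matrix n n ℝ}

lemma isHermitian_whiten (hΔ : Δ.IsHermitian) : (whiten Θ Δ).IsHermitian := by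
  have hT : (CFC.sqrt Θ⁻¹).IsHermitian := (CFC.sqrt_nonneg Θ⁻¹).posSemidef.isHermitian
  rw [IsHermitian, whiten, conjTranspose_mul, conjTranspose_mul, hT.eq, hΔ.eq, mul_assoc]

lemma whiten_neg : whiten Θ (-Δ) = -whiten Θ Δ := by
  simp [whiten]

lemma trace_mul_inv_eq_trace_whiten (hΘ : Θ.PosDef) : (Δ * Θ⁻¹).trace = (whiten Θ Δ).trace := by
  rw [whiten, trace_mul_cycle, hΘ.sqrt_inv_mul_sqrt_inv, trace_mul_comm]

lemma det_add_eq_det_mul_det_one_add_whiten (hΘ : Θ.PosDef) :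
    (Θ + Δ).det = Θ.det * (1 + whiten Θ Δ).det := by
  have hΘΔ : Θ + Δ = Θ * (1 + CFC.sqrt Θ⁻¹ * (CFC.sqrt Θ⁻¹ * Δ)) := by
    rw [← mul_assoc, hΘ.sqrt_inv_mul_sqrt_inv, mul_add, mul_one,
      mul_nonsing_inv_cancel_left _ _ ((isUnit_iff_isUnit_det _).1 hΘ.isUnit)]
  rw [hΘΔ, det_mul, det_one_add_mul_comm, whiten]

lemma whiten_le_algebraMap (hΘ : Θ.PosDef) {c r : ℝ} (hc : 0 < c) (hr : 0 ≤ r)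
    (hcΘ : algebraMap ℝ _ c ≤ Θ) (hΔ : Δ ≤ algebraMap ℝ _ r) :
    whiten Θ Δ ≤ algebraMap ℝ _ (r / c) := by
  have hT : IsSelfAdjoint (CFC.sqrt Θ⁻¹) := (CFC.sqrt_nonneg Θ⁻¹).isSelfAdjoint
  calc whiten Θ Δ ≤ CFC.sqrt Θ⁻¹ * algebraMap ℝ _ r * CFC.sqrt Θ⁻¹ :=
        hT.conjugate_le_conjugate hΔ
    _ = r • Θ⁻¹ := by
        rw [Algebra.algebraMap_eq_smul_one, mul_smul_comm, mul_one, smul_mul_assoc,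
          hΘ.sqrt_inv_mul_sqrt_inv]
    _ ≤ r • algebraMap ℝ _ c⁻¹ := smul_le_smul_of_nonneg_left (hΘ.inv_le_algebraMap_inv hc hcΘ) hr
    _ = algebraMap ℝ _ (r / c) := by rw [Algebra.smul_def, ← map_mul, div_eq_mul_inv]

lemma abs_eigenvalues_whiten_le (hΘ : Θ.PosDef) (hΔ : Δ.IsHermitian)
    (hW : (whiten Θ Δ).IsHermitian) {c r : ℝ} (hc : 0 < c) (hr : 0 ≤ r)
    (hcΘ : algebraMap ℝ _ c ≤ Θ) (h : ∀ i, |hΔ.eigenvalues i| ≤ r) (i : n) :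
    |hW.eigenvalues i| ≤ r / c := by
  obtain ⟨hlo, hhi⟩ := hΔ.forall_abs_eigenvalues_le_iff.1 h
  refine hW.forall_abs_eigenvalues_le_iff.2 ⟨?_, whiten_le_algebraMap hΘ hc hr hcΘ hhi⟩ i
  rw [neg_le, ← whiten_neg]
  exact whiten_le_algebraMap hΘ hc hr hcΘ (neg_le.1 hlo)

lemma trace_mul_inv_sub_log_det_eq_sum (hΘ : Θ.PosDef) (hW : (whiten Θ Δ).IsHermitian)
    (hμ : ∀ i, -1 < hW.eigenvalues i) :
    (Δ * Θ⁻¹).trace - (Real.log (Θ + Δ).det - Real.log Θ.det) =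
      ∑ i, (hW.eigenvalues i - Real.log (1 + hW.eigenvalues i)) := by
  have hdet : (1 + whiten Θ Δ).det = ∏ i, (1 + hW.eigenvalues i) := by
    rw [← hW.det_cfc (1 + ·), cfc_const_add (1 : ℝ) (fun x => x) _ (ha := hW.isSelfAdjoint),
      cfc_id' ℝ _ hW.isSelfAdjoint, map_one]
  have hpos : ∀ i, 1 + hW.eigenvalues i ≠ 0 := fun i => by linarith [hμ i]
  rw [trace_mul_inv_eq_trace_whiten hΘ, hW.trace_eq_sum_eigenvalues,
    det_add_eq_det_mul_det_one_add_whiten hΘ, hdet,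
    Real.log_mul hΘ.det_pos.ne' (Finset.prod_ne_zero_iff.2 fun i _ => hpos i),
    Real.log_prod fun i _ => hpos i, Finset.sum_sub_distrib]
  simp

lemma trace_whiten_sq_le (hΘ : Θ.PosDef) (hΔ : Δ.IsHermitian) {c : ℝ} (hc : 0 < c)
    (hcΘ : algebraMap ℝ _ c ≤ Θ) : (whiten Θ Δ ^ 2).trace ≤ (Δ * Δ).trace / c ^ 2 := by
  have hinv := hΘ.inv_le_algebraMap_inv hc hcΘ
  have hΔ' : star Δ = Δ := hΔ
  have hTT := hΘ.sqrt_inv_mul_sqrt_inv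
  have hT : star (CFC.sqrt Θ⁻¹) = CFC.sqrt Θ⁻¹ := (CFC.sqrt_nonneg Θ⁻¹).isSelfAdjoint
  rw [whiten]
  set T := CFC.sqrt Θ⁻¹
  calc ((T * Δ * T) ^ 2).trace
      = (star (Δ * T) * Θ⁻¹ * (Δ * T)).trace := by
        rw [sq, star_mul, hT, hΔ', ← hTT]
        simp only [mul_assoc]
    _ ≤ c⁻¹ * (star (Δ * T) * (Δ * T)).trace :=
        trace_star_mul_mul_le hinv _
    _ = c⁻¹ * (star Δ * Θ⁻¹ * Δ).trace := by
        rw [star_mul, hT, hΔ', ← hTT, trace_mul_cycle]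
        simp only [mul_assoc]
    _ ≤ c⁻¹ * (c⁻¹ * (star Δ * Δ).trace) :=
        mul_le_mul_of_nonneg_left (trace_star_mul_mul_le hinv _) (inv_nonneg.2 hc.le)
    _ = (Δ * Δ).trace / c ^ 2 := by rw [hΔ']; field_simp

lemma sum_sq_eigenvalues_whiten_le (hΘ : Θ.PosDef) (hΔ : Δ.IsHermitian)
    (hW : (whiten Θ Δ).IsHermitian) {c : ℝ} (hc : 0 < c) (hcΘ : algebraMap ℝ _ c ≤ Θ) :
    ∑ i, hW.eigenvalues i ^ 2 ≤ (Δ * Δ).trace / c ^ 2 := by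
  rw [← hW.trace_cfc (· ^ 2), cfc_pow_id _ 2 hW.isSelfAdjoint]
  exact trace_whiten_sq_le hΘ hΔ hc hcΘ

end whiten

end Matrix

lemma frob_sq_eq_trace_mul_self {p : ℕ} {A : Matrix (Fin p) (Fin p) ℝ} (hA : A.IsHermitian) :
    frob A ^ 2 = (A * A).trace := by
  rw [frob, Real.sq_sqrt (by positivity), trace]
  simp only [diag, mul_apply]
  refine Finset.sum_congr rfl fun i _ => Finset.sum_congr rfl fun j _ => ?_
  rw [sq, (by simpa using hA.apply i j : A j i = A i j)]

theorem stmt13_general {p : ℕ} (Θ₀ Δ₀ : Matrix (Fin p) (Fin p) ℝ)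
    (h0 : Θ₀.PosDef) (hΔ : Δ₀.IsHermitian) (c : ℝ) (hc : 0 < c)
    (hmin : c ≤ ⨅ i, h0.isHermitian.eigenvalues i)
    (hop : (⨆ i, |hΔ.eigenvalues i|) ≤ c / 32) :
    0 ≤ (Δ₀ * Θ₀⁻¹).trace - (Real.log (Θ₀ + Δ₀).det - Real.log Θ₀.det) ∧
    (Δ₀ * Θ₀⁻¹).trace - (Real.log (Θ₀ + Δ₀).det - Real.log Θ₀.det)
      ≤ frob Δ₀ ^ 2 / (2 * (31 * c / 32) ^ 2) := by
  have hcΘ : algebraMap ℝ _ c ≤ Θ₀ := h0.isHermitian.algebraMap_le_iff.2 fun i =>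
    hmin.trans (ciInf_le (Set.finite_range _).bddBelow i)
  have hΔc : ∀ i, |hΔ.eigenvalues i| ≤ c / 32 := fun i =>
    (le_ciSup (Set.finite_range _).bddAbove i).trans hop
  have hW := isHermitian_whiten (Θ := Θ₀) hΔ
  have hμ : ∀ i, |hW.eigenvalues i| ≤ 1 / 32 := fun i =>
    (abs_eigenvalues_whiten_le h0 hΔ hW hc (by positivity) hcΘ hΔc i).trans_eq (by field_simp)
  have hμ1 : ∀ i, -1 < hW.eigenvalues i := fun i => by linarith [(abs_le.1 (hμ i)).1]
  have hsq : ∑ i, hW.eigenvalues i ^ 2 ≤ frob Δ₀ ^ 2 / c ^ 2 := by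
    rw [frob_sq_eq_trace_mul_self hΔ]
    exact sum_sq_eigenvalues_whiten_le h0 hΔ hW hc hcΘ
  rw [trace_mul_inv_sub_log_det_eq_sum h0 hW hμ1]
  refine ⟨Finset.sum_nonneg fun i _ => ?_, ?_⟩
  · linarith [Real.log_le_sub_one_of_pos (neg_lt_iff_pos_add'.1 (hμ1 i))]
  · calc ∑ i, (hW.eigenvalues i - Real.log (1 + hW.eigenvalues i))
        ≤ ∑ i, (1 / 2 + 1 / 32 / (1 - 1 / 32)) * hW.eigenvalues i ^ 2 :=
          Finset.sum_le_sum fun i _ => Real.sub_log_one_add_le (by norm_num) (hμ i)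
      _ ≤ (1 / 2 + 1 / 32 / (1 - 1 / 32)) * (frob Δ₀ ^ 2 / c ^ 2) := by
          rw [← Finset.mul_sum]; gcongr
      _ ≤ frob Δ₀ ^ 2 / (2 * (31 * c / 32) ^ 2) := by
          rw [show frob Δ₀ ^ 2 / (2 * (31 * c / 32) ^ 2) = 512 / 961 * (frob Δ₀ ^ 2 / c ^ 2) by
            field_simp; ring]
          gcongr; norm_num

/-- If `λ_min(Θ₀) ≥ c > 0`, `Δ₀` is symmetric with `‖Δ₀‖₂ ≤ c/32` and `Θ₀ + Δ₀ ≻ 0`, then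
`0 ≤ tr(Δ₀Θ₀⁻¹) − (log det(Θ₀+Δ₀) − log det Θ₀) ≤ ‖Δ₀‖_F²/(2(31c/32)²)`. -/
theorem stmt13 {p : ℕ} [NeZero p] (Θ₀ Δ₀ : Matrix (Fin p) (Fin p) ℝ)
    (h0 : Θ₀.PosDef) (hΔ : Δ₀.IsHermitian) (c : ℝ) (hc : 0 < c)
    (hmin : c ≤ ⨅ i, h0.isHermitian.eigenvalues i)
    (hop : (⨆ i, |hΔ.eigenvalues i|) ≤ c / 32)
    (hpd : (Θ₀ + Δ₀).PosDef) :
    0 ≤ (Δ₀ * Θ₀⁻¹).trace - (Real.log (Θ₀ + Δ₀).det - Real.log Θ₀.det) ∧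
    (Δ₀ * Θ₀⁻¹).trace - (Real.log (Θ₀ + Δ₀).det - Real.log Θ₀.det)
      ≤ frob Δ₀ ^ 2 / (2 * (31 * c / 32) ^ 2) :=
  stmt13_general Θ₀ Δ₀ h0 hΔ c hc hmin hop
end
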